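/- arXiv:2605.01061 — 2 statements merged into one kernel-verified Lean document; each statement's English description precedes it below -/
import Mathlib

section
/- Let μ ∈ ℝ^d be nonzero and let g_i = μ + ξ_i with ‖ξ_i‖ ≤ σ < ‖μ‖ for i = 1,…,n. For any nonnegative weights π_i with w = Σ_i π_i > 0, the weighted sum g = Σ_i π_i g_i satisfies cos∠(g, μ) ≥ (‖μ‖ − σ)/(‖μ‖ + σ), i.e., ⟨g, μ⟩ · (‖μ‖ + σ) ≥ ‖g‖ · ‖μ‖ · (‖μ‖ − σ). -/
/-!
Each `g_i = μ + ξ_i` lies in the cone `‖g‖ ‖μ‖ (‖μ‖ - σ) ≤ ⟪g, μ⟫ (‖μ‖ + σ)`: its component along `μ`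
is at least `‖μ‖ (‖μ‖ - σ)` and its length at most `‖μ‖ + σ`. The inequality is preserved under
nonnegative linear combinations (triangle inequality on the left, linearity on the right), so the
routing weights play no role.
-/

open Finset

open scoped RealInnerProductSpace

variable {E : Type*} [NormedAddCommGroup E] [InnerProductSpace ℝ E]

lemma norm_add_mul_le_inner_add_mul {μ ξ : E} {σ : ℝ} (hξ : ‖ξ‖ ≤ σ) (hσ : σ ≤ ‖μ‖) :
    ‖μ + ξ‖ * (‖μ‖ * (‖μ‖ - σ)) ≤ ⟪μ + ξ, μ⟫ * (‖μ‖ + σ) := by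
  have hσ_nonneg : 0 ≤ σ := (norm_nonneg ξ).trans hξ
  have h_norm : ‖μ + ξ‖ ≤ ‖μ‖ + σ := (norm_add_le μ ξ).trans (by linarith)
  have h_inner : ‖μ‖ * (‖μ‖ - σ) ≤ ⟪μ + ξ, μ⟫ := by
    have h_cs : -(σ * ‖μ‖) ≤ ⟪ξ, μ⟫ :=
      (neg_le_neg (mul_le_mul_of_nonneg_right hξ (norm_nonneg μ))).trans
        (neg_le_of_abs_le (abs_real_inner_le_norm ξ μ))
    rw [inner_add_left, real_inner_self_eq_norm_sq]
    linarith
  have h_gap : 0 ≤ ‖μ‖ * (‖μ‖ - σ) := mul_nonneg (norm_nonneg μ) (sub_nonneg.2 hσ)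
  calc ‖μ + ξ‖ * (‖μ‖ * (‖μ‖ - σ)) ≤ (‖μ‖ + σ) * (‖μ‖ * (‖μ‖ - σ)) := by gcongr
    _ = ‖μ‖ * (‖μ‖ - σ) * (‖μ‖ + σ) := mul_comm _ _
    _ ≤ ⟪μ + ξ, μ⟫ * (‖μ‖ + σ) := by gcongr

lemma norm_sum_smul_mul_le_inner_sum_smul_mul {ι : Type*} (s : Finset ι) {g : ι → E} {π : ι → ℝ}
    {μ : E} {a b : ℝ} (hπ : ∀ i ∈ s, 0 ≤ π i) (ha : 0 ≤ a)
    (hg : ∀ i ∈ s, ‖g i‖ * a ≤ ⟪g i, μ⟫ * b) :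
    ‖∑ i ∈ s, π i • g i‖ * a ≤ ⟪∑ i ∈ s, π i • g i, μ⟫ * b := by
  have h_triangle : ‖∑ i ∈ s, π i • g i‖ ≤ ∑ i ∈ s, π i * ‖g i‖ :=
    norm_sum_le_of_le s fun i hi => by rw [norm_smul, Real.norm_of_nonneg (hπ i hi)]
  calc ‖∑ i ∈ s, π i • g i‖ * a ≤ (∑ i ∈ s, π i * ‖g i‖) * a := by gcongr
    _ = ∑ i ∈ s, π i * (‖g i‖ * a) := by simp only [sum_mul, mul_assoc]
    _ ≤ ∑ i ∈ s, π i * (⟪g i, μ⟫ * b) :=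
      sum_le_sum fun i hi => mul_le_mul_of_nonneg_left (hg i hi) (hπ i hi)
    _ = ⟪∑ i ∈ s, π i • g i, μ⟫ * b := by
      simp only [sum_inner, real_inner_smul_left, sum_mul, mul_assoc]

theorem routing_cone_alignment_general {d n : ℕ}
    (μ : EuclideanSpace ℝ (Fin d))
    (ξ : Fin n → EuclideanSpace ℝ (Fin d)) (σ : ℝ)
    (hξ : ∀ i, ‖ξ i‖ ≤ σ) (hσ : σ < ‖μ‖)
    (π : Fin n → ℝ) (hπ : ∀ i, 0 ≤ π i) :
    (inner ℝ (∑ i, π i • (μ + ξ i)) μ : ℝ) * (‖μ‖ + σ) ≥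
      ‖∑ i, π i • (μ + ξ i)‖ * ‖μ‖ * (‖μ‖ - σ) := by
  rw [ge_iff_le, mul_assoc]
  exact norm_sum_smul_mul_le_inner_sum_smul_mul univ (fun i _ => hπ i)
    (mul_nonneg (norm_nonneg μ) (sub_nonneg.2 hσ.le))
    (fun i _ => norm_add_mul_le_inner_add_mul (hξ i) hσ.le)

theorem routing_cone_alignment {d n : ℕ}
    (μ : EuclideanSpace ℝ (Fin d)) (hμ : μ ≠ 0)
    (ξ : Fin n → EuclideanSpace ℝ (Fin d)) (σ : ℝ)
    (hξ : ∀ i, ‖ξ i‖ ≤ σ) (hσ : σ < ‖μ‖)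
    (π : Fin n → ℝ) (hπ : ∀ i, 0 ≤ π i) (hw : 0 < ∑ i, π i) :
    (inner ℝ (∑ i, π i • (μ + ξ i)) μ : ℝ) * (‖μ‖ + σ) ≥
      ‖∑ i, π i • (μ + ξ i)‖ * ‖μ‖ * (‖μ‖ - σ) :=
  routing_cone_alignment_general μ ξ σ hξ hσ π hπ
end

section
/- Let P, Q ∈ ℝ^{d×d} be orthogonal projectors with P + Q = I (so PQ = QP = 0). Let A ∈ ℝ^{r×d}, B ∈ ℝ^{d×r} with PB = 0, and define updates ΔA = −η g_A Q and ΔB = −η Q g_B for arbitrary g_A ∈ ℝ^{r×d}, g_B ∈ ℝ^{d×r} and η ∈ ℝ. Then for the updated factors A⁺ = A + ΔA, B⁺ = B + ΔB, and any vector h in the range of P, one has P (B⁺A⁺ − BA) h = 0. -/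
open Matrix

theorem bilateral_projection_exact {d r : ℕ}
    (P Q : Matrix (Fin d) (Fin d) ℝ)
    (hP : P * P = P) (hPsym : Pᵀ = P)
    (hQ : Q * Q = Q) (hQsym : Qᵀ = Q)
    (hPQ : P + Q = 1)
    (A gA : Matrix (Fin r) (Fin d) ℝ) (B gB : Matrix (Fin d) (Fin r) ℝ)
    (hPB : P * B = 0) (η : ℝ)
    (h : Fin d → ℝ) (hh : ∃ x, h = P.mulVec x) :
    P.mulVec
      (((B + (-η) • (Q * gB)) * (A + (-η) • (gA * Q)) - B * A).mulVec h) = 0 := by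
  have hQeq : Q = 1 - P := by
    exact (eq_sub_of_add_eq' hPQ)
  have hPQ0 : P * Q = 0 := by
    rw [hQeq, Matrix.mul_sub, Matrix.mul_one, hP, sub_self]
  have key : P * ((B + (-η) • (Q * gB)) * (A + (-η) • (gA * Q)) - B * A) = 0 := by
    simp only [Matrix.mul_sub, Matrix.mul_add, Matrix.add_mul, Matrix.smul_mul,
      Matrix.mul_smul, ← Matrix.mul_assoc, hPB, hPQ0, Matrix.zero_mul,
      smul_zero, zero_add, add_zero, sub_self]
  rw [Matrix.mulVec_mulVec, key, Matrix.zero_mulVec]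
end
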